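/- Suppose ν_p = (n−p)λ for 0 ≤ p ≤ n with λ an integer, and ρ_q = q(ρ_1 − ρ_0) + ρ_0 with ρ_0 = nλ. If there exists a ring homomorphism to the rational model sending a ↦ kα, b ↦ lβ, x ↦ mχ (k,l,m nonzero rationals) intertwining Δ with the rational BV operator Δ(α^p β χ^q) = [(n−p)+q(n+1)]α^p χ^q, then l = 1 and ρ_1 = 2n+1 (given λ = 1). -/

import Mathlib

/-!
On the monomials `b x^q` (that is, `p = 0`) the `ν`-terms cancel, so comparing the two sides
of `r_*(Δ(b x^q)) = Δ(r_*(b x^q))` and cancelling `m^q` gives `ρ_q = l (n + q(n+1))`.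
At `q = 0` this reads `n = l n`, so `l = 1`; at `q = 1` it then gives `ρ_1 = 2n + 1`.
-/

theorem rho_eq_of_comparison_at_zero {ν ρ : ℕ → ℤ} {n q : ℕ} {k l m : ℚ} (hm : m ≠ 0)
    (h : ((ν 0 + ρ q - ν 0 : ℤ) : ℚ) * k ^ (0 : ℕ) * m ^ q =
      l * (((n : ℚ) - (0 : ℕ)) + q * ((n : ℚ) + 1)) * k ^ (0 : ℕ) * m ^ q) :
    (ρ q : ℚ) = l * (n + q * (n + 1)) := by
  simp only [add_sub_cancel_left, pow_zero, mul_one, Nat.cast_zero, sub_zero] at h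
  exact mul_right_cancel₀ (pow_ne_zero q hm) h

theorem stmt_17_general (n : ℕ) (hn : 1 ≤ n) (lam : ℤ) (hlam : lam = 1)
    (ν ρ : ℕ → ℤ)
    (hρ0 : ρ 0 = (n : ℤ) * lam)
    (k l m : ℚ) (hm : m ≠ 0)
    (hcomp : ∀ p q : ℕ, p ≤ n → (p < n ∨ q = 0) →
      ((ν p + ρ q - ν 0 : ℤ) : ℚ) * k ^ p * m ^ q =
        l * (((n : ℚ) - p) + q * ((n : ℚ) + 1)) * k ^ p * m ^ q) :
    l = 1 ∧ ρ 1 = 2 * (n : ℤ) + 1 := by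
  have hρ_zero := rho_eq_of_comparison_at_zero hm (hcomp 0 0 n.zero_le (Or.inr rfl))
  have hρ_one := rho_eq_of_comparison_at_zero hm (hcomp 0 1 n.zero_le (Or.inl hn))
  have hn_ne : (n : ℚ) ≠ 0 := Nat.cast_ne_zero.mpr (by omega)
  have hl : l = 1 := by
    rw [hρ0, hlam] at hρ_zero
    push_cast at hρ_zero
    exact mul_left_cancel₀ hn_ne (by linarith : (n : ℚ) * l = n * 1)
  refine ⟨hl, ?_⟩
  rw [hl] at hρ_one
  push_cast at hρ_one
  exact_mod_cast (by linarith : (ρ 1 : ℚ) = 2 * n + 1)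

/-- the rational comparison argument.  Suppose the integral BV coefficients
satisfy `ν_p = (n-p)λ` for `0 ≤ p ≤ n` (with `λ = 1`) and `ρ_q = q(ρ_1 - ρ_0) + ρ_0` with
`ρ_0 = nλ`, so that `Δ(a^p b x^q) = (ν_p + ρ_q - ν_0) a^p x^q` integrally.  If there is a
ring homomorphism `r_*` to the rational model sending `a ↦ kα`, `b ↦ lβ`, `x ↦ mχ`
(`k, l, m` nonzero rationals) which intertwines `Δ` with the rational BV operator
`Δ(α^p β χ^q) = [(n-p) + q(n+1)] α^p χ^q` — i.e. comparing the coefficients of the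
nonzero monomials `α^p χ^q` (those with `p < n` or `q = 0`) in
`r_*(Δ(a^p b x^q)) = Δ(r_*(a^p b x^q))` — then `l = 1` and `ρ_1 = 2n + 1`. -/
theorem stmt_17 (n : ℕ) (hn : 1 ≤ n) (lam : ℤ) (hlam : lam = 1)
    (ν ρ : ℕ → ℤ)
    (hν : ∀ p : ℕ, p ≤ n → ν p = ((n : ℤ) - p) * lam)
    (hρ : ∀ q : ℕ, ρ q = (q : ℤ) * (ρ 1 - ρ 0) + ρ 0)
    (hρ0 : ρ 0 = (n : ℤ) * lam)
    (k l m : ℚ) (hk : k ≠ 0) (hl : l ≠ 0) (hm : m ≠ 0)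
    (hcomp : ∀ p q : ℕ, p ≤ n → (p < n ∨ q = 0) →
      ((ν p + ρ q - ν 0 : ℤ) : ℚ) * k ^ p * m ^ q =
        l * (((n : ℚ) - p) + q * ((n : ℚ) + 1)) * k ^ p * m ^ q) :
    l = 1 ∧ ρ 1 = 2 * (n : ℤ) + 1 :=
  stmt_17_general n hn lam hlam ν ρ hρ0 k l m hm hcomp
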